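/- (Theorem 1, projection containment, vertex-local form.) Let α ∈ (0, 2π), D a finite set of directions at vertex i, x ∈ [0,1]^D, and suppose there exist nonnegative y ∈ ℝ^D with Σ_{k ∈ D} y_k = 1 and x_v ≤ Σ_{k ∈ L_v} y_k for every v ∈ D, where L_v := {v} ∪ {k ∈ D \ {v} : (θ_v − θ_k) mod 2π ≤ α}. Then for every nonempty s ⊆ D, Σ_{e ∈ s} x_e ≤ v^{(s,α)}, where v^{(s,α)} := max_{j ∈ s} |{k ∈ s : (θ_k − θ_j) mod 2π ≤ α}|. -/

import Mathlib

open Real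

noncomputable def amod (x : ℝ) : ℝ := toIcoMod Real.two_pi_pos 0 x

noncomputable def ang (a b : ℝ) : ℝ := amod (b - a)

noncomputable def Lset (D : Finset ℝ) (α v : ℝ) : Finset ℝ :=
  insert v ((D.erase v).filter fun k => ang k v ≤ α)

/-!
Double counting: summing `x e ≤ ∑_{k ∈ L_e} y k` over `e ∈ s` weighs each `y k` by the
number of `e ∈ s` with `k ∈ L_e`. These `e` all lie in the arc of length `α` starting at `k`,
and that arc meets `s` in no more points than the arc of the same length starting at the first
point of `s` after `k`, so the weight is at most `v^{(s,α)}`, and `∑ y = 1`.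
-/

open Finset

lemma amod_mem_Ico (t : ℝ) : amod t ∈ Set.Ico 0 (2 * π) := by
  simpa [amod] using toIcoMod_mem_Ico Real.two_pi_pos 0 t

lemma ang_self (a : ℝ) : ang a a = 0 := by
  simp [ang, amod]

lemma ang_eq_sub_of_le {j k e : ℝ} (h : ang k j ≤ ang k e) : ang j e = ang k e - ang k j := by
  have hj := amod_mem_Ico (j - k)
  have he := amod_mem_Ico (e - k)
  have hrange : ang k e - ang k j ∈ Set.Ico (0 : ℝ) (0 + 2 * π) :=
    ⟨sub_nonneg.2 h, by simp only [ang] at *; linarith [hj.1, he.2]⟩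
  rw [← (toIcoMod_eq_self Real.two_pi_pos).2 hrange, ang, amod, toIcoMod_eq_toIcoMod]
  refine ⟨toIcoDiv Real.two_pi_pos 0 (j - k) - toIcoDiv Real.two_pi_pos 0 (e - k), ?_⟩
  have h1 := toIcoMod_sub_self Real.two_pi_pos 0 (e - k)
  have h2 := toIcoMod_sub_self Real.two_pi_pos 0 (j - k)
  simp only [ang, amod, sub_smul] at *
  linear_combination h1 - h2

lemma card_filter_ang_le_le_sup' (α : ℝ) (s : Finset ℝ) (hs : s.Nonempty) (k : ℝ) :
    #{e ∈ s | ang k e ≤ α} ≤ s.sup' hs fun j => #{e ∈ s | ang j e ≤ α} := by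
  rcases (s.filter fun e => ang k e ≤ α).eq_empty_or_nonempty with hemp | hne
  · rw [hemp, card_empty]
    exact Nat.zero_le _
  obtain ⟨j, hj, hj_min⟩ := exists_min_image _ (ang k) hne
  refine (card_le_card fun e he => ?_).trans
    (le_sup' (fun j => #{e ∈ s | ang j e ≤ α}) (mem_filter.1 hj).1)
  rw [mem_filter] at he ⊢
  refine ⟨he.1, ?_⟩
  rw [ang_eq_sub_of_le (hj_min e (mem_filter.2 he))]
  have : 0 ≤ ang k j := (amod_mem_Ico (j - k)).1
  linarith [he.2]

lemma Lset_subset {D : Finset ℝ} {v : ℝ} (α : ℝ) (hv : v ∈ D) : Lset D α v ⊆ D :=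
  insert_subset hv ((filter_subset _ _).trans (erase_subset _ _))

lemma ang_le_of_mem_Lset {D : Finset ℝ} {α v k : ℝ} (hα : 0 ≤ α) (hk : k ∈ Lset D α v) :
    ang k v ≤ α := by
  rcases mem_insert.1 hk with rfl | hk
  · rw [ang_self]; exact hα
  · exact (mem_filter.1 hk).2

lemma sum_sum_le_mul_sum_of_card_le {ι κ R : Type*} [DecidableEq κ] [CommSemiring R]
    [PartialOrder R] [IsOrderedRing R] {s : Finset ι} {D : Finset κ} {L : ι → Finset κ}
    {y : κ → R} {M : ℕ} (hL : ∀ e ∈ s, L e ⊆ D) (hy : ∀ k ∈ D, 0 ≤ y k)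
    (hM : ∀ k ∈ D, #{e ∈ s | k ∈ L e} ≤ M) :
    ∑ e ∈ s, ∑ k ∈ L e, y k ≤ M * ∑ k ∈ D, y k := by
  rw [sum_comm' (t' := D) (s' := fun k => {e ∈ s | k ∈ L e})
    (fun e k => ⟨fun h => ⟨mem_filter.2 h, hL e h.1 h.2⟩, fun h => mem_filter.1 h.1⟩),
    mul_sum]
  refine sum_le_sum fun k hk => ?_
  rw [sum_const, nsmul_eq_mul]
  exact mul_le_mul_of_nonneg_right (Nat.mono_cast (hM k hk)) (hy k hk)

theorem stmt13_general (α : ℝ) (hα : α ∈ Set.Ioo 0 (2 * π)) (D : Finset ℝ)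
    (x y : ℝ → ℝ)
    (hy0 : ∀ k ∈ D, 0 ≤ y k) (hy1 : ∑ k ∈ D, y k = 1)
    (hxy : ∀ v ∈ D, x v ≤ ∑ k ∈ Lset D α v, y k) :
    ∀ s : Finset ℝ, s ⊆ D → ∀ hs : s.Nonempty,
      (∑ e ∈ s, x e) ≤
        (((s.sup' hs fun j => (s.filter fun k => ang j k ≤ α).card) : ℕ) : ℝ) := by
  intro s hsD hs
  have hmult : ∀ k ∈ D, #{e ∈ s | k ∈ Lset D α e} ≤
      s.sup' hs fun j => #{e ∈ s | ang j e ≤ α} := fun k _ =>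
    (card_le_card (monotone_filter_right s fun _ _ => ang_le_of_mem_Lset hα.1.le)).trans
      (card_filter_ang_le_le_sup' α s hs k)
  calc ∑ e ∈ s, x e ≤ ∑ e ∈ s, ∑ k ∈ Lset D α e, y k :=
        sum_le_sum fun e he => hxy e (hsD he)
    _ ≤ _ * ∑ k ∈ D, y k :=
        sum_sum_le_mul_sum_of_card_le (fun e he => Lset_subset α (hsD he)) hy0 hmult
    _ = _ := by rw [hy1, mul_one]

theorem stmt13 (α : ℝ) (hα : α ∈ Set.Ioo 0 (2 * π)) (D : Finset ℝ)
    (hD : ∀ θ ∈ D, θ ∈ Set.Ico 0 (2 * π)) (x y : ℝ → ℝ)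
    (hx : ∀ v ∈ D, x v ∈ Set.Icc (0 : ℝ) 1)
    (hy0 : ∀ k ∈ D, 0 ≤ y k) (hy1 : ∑ k ∈ D, y k = 1)
    (hxy : ∀ v ∈ D, x v ≤ ∑ k ∈ Lset D α v, y k) :
    ∀ s : Finset ℝ, s ⊆ D → ∀ hs : s.Nonempty,
      (∑ e ∈ s, x e) ≤
        (((s.sup' hs fun j => (s.filter fun k => ang j k ≤ α).card) : ℕ) : ℝ) :=
  stmt13_general α hα D x y hy0 hy1 hxy
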